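/- Let μ be a Borel probability measure on a separable Banach space X, let Γ be a symmetric positive definite d×d real matrix, and let G, G_K : X → ℝ^d be measurable maps with ∫_X ‖G(x) - G_K(x)‖_Γ² μ(dx) < ∞. Let π and π^K be the evidence densities on ℝ^d associated with G and G_K respectively. Then D_KL(π^K, π) ≤ (1/2) ∫_X ‖G(x) - G_K(x)‖_Γ² μ(dx). -/

import Mathlib

open MeasureTheory Real Matrix

/-- `‖z‖_Γ² = zᵀ Γ⁻¹ z` for `z ∈ ℝ^d`. -/
noncomputable def normGammaSq {d : ℕ} (Γ : Matrix (Fin d) (Fin d) ℝ) (z : Fin d → ℝ) : ℝ :=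
  z ⬝ᵥ (Γ⁻¹ *ᵥ z)

/-- Gaussian likelihood density
`π(y|x) = (2π)^{-d/2} det(Γ)^{-1/2} exp(-½‖G(x)-y‖_Γ²)`. -/
noncomputable def gaussLikelihood {d : ℕ} (Γ : Matrix (Fin d) (Fin d) ℝ) {X : Type*}
    (G : X → (Fin d → ℝ)) (x : X) (y : Fin d → ℝ) : ℝ :=
  (Real.sqrt ((2 * Real.pi) ^ d * Γ.det))⁻¹ *
    Real.exp (-(1 / 2) * normGammaSq Γ (G x - y))

/-- Evidence density `π(y) = ∫_X π(y|x) μ(dx)`. -/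
noncomputable def evidenceDensity {d : ℕ} (Γ : Matrix (Fin d) (Fin d) ℝ) {X : Type*}
    [MeasurableSpace X] (μ : Measure X) (G : X → (Fin d → ℝ)) (y : Fin d → ℝ) : ℝ :=
  ∫ x, gaussLikelihood Γ G x y ∂μ

/-!
Both evidences are `μ`-mixtures of Gaussian densities in `y`: `π^K(y) = ∫ φ_K(x, y) μ(dx)` and
`π(y) = ∫ φ(x, y) μ(dx)`, with `φ_K(x, ·) = N(G_K x, Γ)` and `φ(x, ·) = N(G x, Γ)`. The log-sum
inequality (joint convexity of `(a, b) ↦ a log (a / b)`) gives, for every `y`,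
`π^K log (π^K / π) ≤ ∫ φ_K log (φ_K / φ) dμ`. Integrating in `y` and swapping the integrals
leaves the relative entropy of two Gaussians with the same covariance, which is
`½ ‖G x - G_K x‖_Γ²`.

The Gaussian integrals are computed with the substitution `z = Γ^{1/2} u`, which turns
`‖z‖_Γ²` into `u ⬝ᵥ u`; the second moment of the Gaussian gives the integrability needed for
Fubini.
-/

open scoped MatrixOrder

section LogSum

theorem sub_le_mul_log_div {s t : ℝ} (hs : 0 < s) (ht : 0 < t) : s - t ≤ s * log (s / t) := by
  have h := mul_le_mul_of_nonneg_left (log_le_sub_one_of_pos (div_pos ht hs)) hs.le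
  rw [log_div ht.ne' hs.ne', mul_sub, mul_sub, mul_div_cancel₀ t hs.ne'] at h
  rw [log_div hs.ne' ht.ne']
  linarith

variable {α : Type*} [MeasurableSpace α] {μ : Measure α}

theorem integral_pos_of_forall_pos [NeZero μ] {f : α → ℝ} (hf : ∀ x, 0 < f x)
    (hfi : Integrable f μ) : 0 < ∫ x, f x ∂μ := by
  rw [integral_pos_iff_support_of_nonneg (fun x => (hf x).le) hfi,
    Function.support_eq_univ fun x => (hf x).ne']
  exact Measure.measure_univ_pos.2 (NeZero.ne μ)

theorem integral_mul_log_integral_div_le {a b : α → ℝ} (ha : ∀ x, 0 < a x) (hb : ∀ x, 0 < b x)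
    (hai : Integrable a μ) (hbi : Integrable b μ)
    (habi : Integrable (fun x => a x * log (a x / b x)) μ) :
    (∫ x, a x ∂μ) * log ((∫ x, a x ∂μ) / ∫ x, b x ∂μ) ≤ ∫ x, a x * log (a x / b x) ∂μ := by
  rcases eq_zero_or_neZero μ with rfl | _
  · simp
  set A := ∫ x, a x ∂μ
  set B := ∫ x, b x ∂μ
  have hA : 0 < A := integral_pos_of_forall_pos ha hai
  have hB : 0 < B := integral_pos_of_forall_pos hb hbi
  have hpoint : ∀ x, a x - A / B * b x ≤ a x * log (a x / b x) - log (A / B) * a x := by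
    intro x
    have h := sub_le_mul_log_div (ha x) (mul_pos (div_pos hA hB) (hb x))
    rwa [div_mul_eq_div_div_swap, log_div (div_pos (ha x) (hb x)).ne' (div_pos hA hB).ne', mul_sub,
      mul_comm (a x) (log (A / B))] at h
  have h := integral_mono (f := fun x => a x - A / B * b x)
    (g := fun x => a x * log (a x / b x) - log (A / B) * a x) (hai.sub (hbi.const_mul _))
    (habi.sub (hai.const_mul _)) hpoint
  rw [integral_sub hai (hbi.const_mul _), integral_sub habi (hai.const_mul _), integral_const_mul,
    integral_const_mul, div_mul_cancel₀ A hB.ne'] at h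
  linarith

end LogSum

section RealMatrix

variable {n : Type*} {A : Matrix n n ℝ}

theorem Matrix.PosDef.isSymm (hA : A.PosDef) : A.IsSymm := by
  simpa using hA.isHermitian

variable [Fintype n] [DecidableEq n]

theorem Matrix.PosSemidef.det_sqrt_eq_sqrt_det (hA : A.PosSemidef) :
    (CFC.sqrt A).det = √A.det := by
  rw [hA.det_sqrt, RCLike.sqrt_real]

theorem Matrix.PosDef.det_sqrt_pos (hA : A.PosDef) : 0 < (CFC.sqrt A).det := by
  rw [hA.posSemidef.det_sqrt_eq_sqrt_det]
  exact sqrt_pos.2 hA.det_pos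

end RealMatrix

section QuadraticForm

variable {d : ℕ} {Γ : Matrix (Fin d) (Fin d) ℝ}

@[fun_prop]
theorem continuous_normGammaSq (Γ : Matrix (Fin d) (Fin d) ℝ) : Continuous (normGammaSq Γ) := by
  unfold normGammaSq
  fun_prop

theorem normGammaSq_neg (Γ : Matrix (Fin d) (Fin d) ℝ) (z : Fin d → ℝ) :
    normGammaSq Γ (-z) = normGammaSq Γ z := by
  simp [normGammaSq, mulVec_neg]

theorem normGammaSq_nonneg (hΓ : Γ.PosDef) (z : Fin d → ℝ) : 0 ≤ normGammaSq Γ z := by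
  simpa [normGammaSq] using hΓ.inv.posSemidef.dotProduct_mulVec_nonneg z

theorem normGammaSq_add (hΓ : Γ.IsSymm) (a b : Fin d → ℝ) :
    normGammaSq Γ (a + b) = normGammaSq Γ a + 2 * (a ⬝ᵥ Γ⁻¹ *ᵥ b) + normGammaSq Γ b := by
  have hba : b ⬝ᵥ Γ⁻¹ *ᵥ a = a ⬝ᵥ Γ⁻¹ *ᵥ b := by
    rw [dotProduct_mulVec, ← mulVec_transpose, transpose_nonsing_inv, hΓ.eq, dotProduct_comm]
  simp only [normGammaSq, mulVec_add, dotProduct_add, add_dotProduct, hba]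
  ring

theorem abs_dotProduct_inv_mulVec_le (hΓ : Γ.PosDef) (a b : Fin d → ℝ) :
    |a ⬝ᵥ Γ⁻¹ *ᵥ b| ≤ (normGammaSq Γ a + normGammaSq Γ b) / 2 := by
  have hplus := normGammaSq_add hΓ.isSymm a b
  have hminus := normGammaSq_add hΓ.isSymm a (-b)
  rw [normGammaSq_neg, mulVec_neg, dotProduct_neg] at hminus
  have := normGammaSq_nonneg hΓ (a + b)
  have := normGammaSq_nonneg hΓ (a + -b)
  rw [abs_le]
  constructor <;> linarith

theorem normGammaSq_sqrt_mulVec (hΓ : Γ.PosDef) (u : Fin d → ℝ) :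
    normGammaSq Γ (CFC.sqrt Γ *ᵥ u) = u ⬝ᵥ u := by
  have hdet := hΓ.det_sqrt_pos.ne'
  set S := CFC.sqrt Γ
  have hSS : S * S = Γ := CFC.sqrt_mul_sqrt_self Γ hΓ.posSemidef.nonneg
  have hS : Sᵀ = S := by simpa using (CFC.sqrt_nonneg Γ).posSemidef.isHermitian.eq
  have hΓS : Γ⁻¹ *ᵥ (S *ᵥ u) = S⁻¹ *ᵥ u := by
    rw [← hSS, Matrix.mul_inv_rev, mulVec_mulVec, mul_assoc, nonsing_inv_mul _ hdet.isUnit, mul_one]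
  rw [normGammaSq, hΓS, ← vecMul_transpose, hS, ← dotProduct_mulVec, mulVec_mulVec,
    mul_nonsing_inv _ hdet.isUnit, one_mulVec]

end QuadraticForm

section ChangeOfVariables

variable {ι : Type*} [Fintype ι] [DecidableEq ι] {E : Type*} [NormedAddCommGroup E]
  {M : Matrix ι ι ℝ}

theorem measurableEmbedding_toLin' (hM : M.det ≠ 0) : MeasurableEmbedding (toLin' M) :=
  (LinearMap.isClosedEmbedding_of_injective (LinearMap.ker_eq_bot.2
    (mulVec_injective_iff_isUnit.2 (isUnit_iff_isUnit_det M |>.2 hM.isUnit)))).measurableEmbedding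

theorem integral_comp_mulVec [NormedSpace ℝ E] (hM : M.det ≠ 0) (f : (ι → ℝ) → E) :
    ∫ u, f (M *ᵥ u) = |M.det|⁻¹ • ∫ z, f z := by
  have h := (measurableEmbedding_toLin' hM).integral_map (μ := volume) f
  rw [map_matrix_volume_pi_eq_smul_volume_pi hM, integral_smul_measure,
    ENNReal.toReal_ofReal (abs_nonneg _), abs_inv] at h
  simpa only [toLin'_apply] using h.symm

theorem integrable_comp_mulVec_iff (hM : M.det ≠ 0) {f : (ι → ℝ) → E} :
    Integrable (fun u => f (M *ᵥ u)) ↔ Integrable f := by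
  have h := (measurableEmbedding_toLin' hM).integrable_map_iff (μ := volume) (g := f)
  rw [map_matrix_volume_pi_eq_smul_volume_pi hM,
    integrable_smul_measure (by simpa using hM) ENNReal.ofReal_ne_top] at h
  simpa only [Function.comp_def, toLin'_apply] using h.symm

end ChangeOfVariables

section StandardGaussian

variable {ι : Type*} [Fintype ι] {b : ℝ}

theorem exp_neg_mul_dotProduct_self (b : ℝ) (u : ι → ℝ) :
    exp (-b * (u ⬝ᵥ u)) = ∏ i, exp (-b * u i ^ 2) := by
  simp only [dotProduct, Finset.mul_sum, exp_sum, sq]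

theorem integrable_exp_neg_mul_dotProduct_self (hb : 0 < b) :
    Integrable (fun u : ι → ℝ => exp (-b * (u ⬝ᵥ u))) := by
  simp only [exp_neg_mul_dotProduct_self]
  exact Integrable.fintype_prod (f := fun _ x => exp (-b * x ^ 2))
    fun _ => integrable_exp_neg_mul_sq hb

theorem integral_exp_neg_mul_dotProduct_self (b : ℝ) :
    ∫ u : ι → ℝ, exp (-b * (u ⬝ᵥ u)) = √(π / b) ^ Fintype.card ι := by
  simp only [exp_neg_mul_dotProduct_self]
  rw [integral_fintype_prod_volume_eq_pow (fun x => exp (-b * x ^ 2)), integral_gaussian]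

end StandardGaussian

section Gaussian

variable {d : ℕ} {Γ : Matrix (Fin d) (Fin d) ℝ} {b : ℝ}

theorem integrable_exp_neg_mul_normGammaSq (hΓ : Γ.PosDef) (hb : 0 < b) :
    Integrable (fun z => exp (-b * normGammaSq Γ z)) := by
  rw [← integrable_comp_mulVec_iff hΓ.det_sqrt_pos.ne']
  simpa only [normGammaSq_sqrt_mulVec hΓ] using integrable_exp_neg_mul_dotProduct_self hb

theorem integral_exp_neg_mul_normGammaSq (hΓ : Γ.PosDef) (b : ℝ) :
    ∫ z, exp (-b * normGammaSq Γ z) = √(π / b) ^ d * √Γ.det := by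
  have hpos := hΓ.det_sqrt_pos
  have h := integral_comp_mulVec hpos.ne' fun z => exp (-b * normGammaSq Γ z)
  simp only [normGammaSq_sqrt_mulVec hΓ, integral_exp_neg_mul_dotProduct_self, Fintype.card_fin,
    abs_of_pos hpos, smul_eq_mul] at h
  rw [h, ← hΓ.posSemidef.det_sqrt_eq_sqrt_det]
  field_simp

theorem mul_exp_neg_half_le (t : ℝ) : t * exp (-(1 / 2) * t) ≤ 4 * exp (-(1 / 4) * t) := by
  have hsplit : exp (-(1 / 2) * t) = exp (-(1 / 4) * t) * exp (-(1 / 4) * t) := by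
    rw [← exp_add]; ring_nf
  have hlin : t * exp (-(1 / 4) * t) ≤ 4 := by
    have h := add_one_le_exp (t / 4)
    rw [show -(1 / 4) * t = -(t / 4) by ring, exp_neg, ← div_eq_mul_inv, div_le_iff₀ (exp_pos _)]
    linarith
  rw [hsplit, ← mul_assoc]
  exact mul_le_mul_of_nonneg_right hlin (exp_pos _).le

theorem integrable_exp_neg_half_normGammaSq_mul_normGammaSq (hΓ : Γ.PosDef) :
    Integrable (fun z => exp (-(1 / 2) * normGammaSq Γ z) * normGammaSq Γ z) := by
  refine ((integrable_exp_neg_mul_normGammaSq hΓ (b := 1 / 4) (by norm_num)).const_mul 4).mono'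
    (by fun_prop) (Filter.Eventually.of_forall fun z => ?_)
  have hz := normGammaSq_nonneg hΓ z
  rw [norm_of_nonneg (by positivity), mul_comm]
  exact mul_exp_neg_half_le _

theorem integrable_exp_neg_half_normGammaSq_mul_dotProduct (hΓ : Γ.PosDef) (w : Fin d → ℝ) :
    Integrable (fun z => exp (-(1 / 2) * normGammaSq Γ z) * (w ⬝ᵥ Γ⁻¹ *ᵥ z)) := by
  refine ((integrable_exp_neg_mul_normGammaSq hΓ (b := 1 / 2) (by norm_num)).mul_const
    (normGammaSq Γ w / 2) |>.add
    ((integrable_exp_neg_half_normGammaSq_mul_normGammaSq hΓ).div_const 2)).mono'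
    (by fun_prop) (Filter.Eventually.of_forall fun z => ?_)
  rw [norm_mul, norm_of_nonneg (exp_pos _).le, norm_eq_abs]
  calc exp (-(1 / 2) * normGammaSq Γ z) * |w ⬝ᵥ Γ⁻¹ *ᵥ z|
      ≤ exp (-(1 / 2) * normGammaSq Γ z) * ((normGammaSq Γ w + normGammaSq Γ z) / 2) :=
        mul_le_mul_of_nonneg_left (abs_dotProduct_inv_mulVec_le hΓ w z) (exp_pos _).le
    _ = _ := by rw [Pi.add_apply]; ring

theorem integral_exp_neg_mul_normGammaSq_mul_dotProduct (b : ℝ) (w : Fin d → ℝ) :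
    ∫ z, exp (-b * normGammaSq Γ z) * (w ⬝ᵥ Γ⁻¹ *ᵥ z) = 0 := by
  have h := integral_neg_eq_self (fun z => exp (-b * normGammaSq Γ z) * (w ⬝ᵥ Γ⁻¹ *ᵥ z)) volume
  simp only [normGammaSq_neg, mulVec_neg, dotProduct_neg, mul_neg, integral_neg] at h
  linarith

theorem integral_exp_neg_half_normGammaSq (hΓ : Γ.PosDef) :
    ∫ z, exp (-(1 / 2) * normGammaSq Γ z) = √((2 * π) ^ d * Γ.det) := by
  have hdet := hΓ.det_pos
  rw [integral_exp_neg_mul_normGammaSq hΓ, eq_comm,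
    sqrt_eq_iff_eq_sq (by positivity) (by positivity), mul_pow (√(π / (1 / 2)) ^ d), ← pow_mul,
    mul_comm d, pow_mul, sq_sqrt (by positivity), sq_sqrt hdet.le]
  ring

end Gaussian

section Likelihood

variable {d : ℕ} {Γ : Matrix (Fin d) (Fin d) ℝ} {X : Type*}

theorem gaussLikelihood_pos (hΓ : Γ.PosDef) (G : X → Fin d → ℝ) (x : X) (y : Fin d → ℝ) :
    0 < gaussLikelihood Γ G x y := by
  have := hΓ.det_pos
  unfold gaussLikelihood
  positivity

theorem gaussLikelihood_le (hΓ : Γ.PosDef) (G : X → Fin d → ℝ) (x : X) (y : Fin d → ℝ) :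
    gaussLikelihood Γ G x y ≤ (√((2 * π) ^ d * Γ.det))⁻¹ := by
  have := normGammaSq_nonneg hΓ (G x - y)
  exact mul_le_of_le_one_right (by positivity) (exp_le_one_iff.2 (by linarith))

theorem measurable_gaussLikelihood [MeasurableSpace X] {G : X → Fin d → ℝ} (hG : Measurable G) :
    Measurable (Function.uncurry (gaussLikelihood Γ G)) := by
  have hsub : Measurable fun p : X × (Fin d → ℝ) => G p.1 - p.2 :=
    (hG.comp measurable_fst).sub measurable_snd
  exact measurable_const.mul (((continuous_normGammaSq Γ).measurable.comp hsub).const_mul _).exp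

theorem integrable_gaussLikelihood (hΓ : Γ.PosDef) (G : X → Fin d → ℝ) (x : X) :
    Integrable (gaussLikelihood Γ G x) :=
  ((integrable_exp_neg_mul_normGammaSq hΓ (by norm_num : (0 : ℝ) < 1 / 2)).comp_sub_left
    (G x)).const_mul _

theorem integral_gaussLikelihood (hΓ : Γ.PosDef) (G : X → Fin d → ℝ) (x : X) :
    ∫ y, gaussLikelihood Γ G x y = 1 := by
  have := hΓ.det_pos
  simp only [gaussLikelihood, integral_const_mul]
  rw [integral_sub_left_eq_self (fun z => exp (-(1 / 2) * normGammaSq Γ z)) volume (G x),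
    integral_exp_neg_half_normGammaSq hΓ, inv_mul_cancel₀ (by positivity)]

theorem log_gaussLikelihood_div (hΓ : Γ.PosDef) (G G' : X → Fin d → ℝ) (x : X)
    (y : Fin d → ℝ) :
    log (gaussLikelihood Γ G' x y / gaussLikelihood Γ G x y) =
      normGammaSq Γ (G x - G' x) / 2 + (G x - G' x) ⬝ᵥ Γ⁻¹ *ᵥ (G' x - y) := by
  have := hΓ.det_pos
  rw [gaussLikelihood, gaussLikelihood, mul_div_mul_left _ _ (by positivity), ← exp_sub, log_exp,
    show G x - y = (G x - G' x) + (G' x - y) by abel, normGammaSq_add hΓ.isSymm]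
  ring

end Likelihood

section RelativeEntropy

variable {d : ℕ} {Γ : Matrix (Fin d) (Fin d) ℝ} {X : Type*}

theorem gaussLikelihood_mul_log_div (hΓ : Γ.PosDef) (G G' : X → Fin d → ℝ) (x : X)
    (y : Fin d → ℝ) :
    gaussLikelihood Γ G' x y * log (gaussLikelihood Γ G' x y / gaussLikelihood Γ G x y) =
      (√((2 * π) ^ d * Γ.det))⁻¹ * (exp (-(1 / 2) * normGammaSq Γ (G' x - y)) *
        (normGammaSq Γ (G x - G' x) / 2) + exp (-(1 / 2) * normGammaSq Γ (G' x - y)) *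
        ((G x - G' x) ⬝ᵥ Γ⁻¹ *ᵥ (G' x - y))) := by
  rw [log_gaussLikelihood_div hΓ, gaussLikelihood, mul_assoc, mul_add]

theorem integrable_gaussLikelihood_mul_log_div (hΓ : Γ.PosDef) (G G' : X → Fin d → ℝ) (x : X) :
    Integrable fun y =>
      gaussLikelihood Γ G' x y * log (gaussLikelihood Γ G' x y / gaussLikelihood Γ G x y) := by
  simp only [gaussLikelihood_mul_log_div hΓ]
  exact ((((integrable_exp_neg_mul_normGammaSq hΓ (by norm_num : (0 : ℝ) < 1 / 2)).mul_const _).add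
    (integrable_exp_neg_half_normGammaSq_mul_dotProduct hΓ _)).comp_sub_left (G' x)).const_mul _

theorem integral_gaussLikelihood_mul_log_div (hΓ : Γ.PosDef) (G G' : X → Fin d → ℝ) (x : X) :
    ∫ y, gaussLikelihood Γ G' x y * log (gaussLikelihood Γ G' x y / gaussLikelihood Γ G x y) =
      normGammaSq Γ (G x - G' x) / 2 := by
  have := hΓ.det_pos
  simp only [gaussLikelihood_mul_log_div hΓ, integral_const_mul]
  rw [integral_sub_left_eq_self (fun z => exp (-(1 / 2) * normGammaSq Γ z) *
      (normGammaSq Γ (G x - G' x) / 2) + exp (-(1 / 2) * normGammaSq Γ z) *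
        ((G x - G' x) ⬝ᵥ Γ⁻¹ *ᵥ z)) volume (G' x),
    integral_add ((integrable_exp_neg_mul_normGammaSq hΓ (by norm_num)).mul_const _)
      (integrable_exp_neg_half_normGammaSq_mul_dotProduct hΓ _),
    integral_mul_const, integral_exp_neg_half_normGammaSq hΓ,
    integral_exp_neg_mul_normGammaSq_mul_dotProduct, add_zero, ← mul_assoc,
    inv_mul_cancel₀ (by positivity), one_mul]

theorem integral_norm_gaussLikelihood_mul_log_div_le (hΓ : Γ.PosDef) (G G' : X → Fin d → ℝ)
    (x : X) :
    ∫ y, ‖gaussLikelihood Γ G' x y * log (gaussLikelihood Γ G' x y / gaussLikelihood Γ G x y)‖ ≤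
      normGammaSq Γ (G x - G' x) + (√((2 * π) ^ d * Γ.det))⁻¹ / 2 *
        ∫ z, exp (-(1 / 2) * normGammaSq Γ z) * normGammaSq Γ z := by
  have := hΓ.det_pos
  set c := (√((2 * π) ^ d * Γ.det))⁻¹
  set Δ := G x - G' x
  set g : (Fin d → ℝ) → ℝ := fun z => exp (-(1 / 2) * normGammaSq Γ z)
  have hg : Integrable g := integrable_exp_neg_mul_normGammaSq hΓ (by norm_num)
  have hgq : Integrable fun z => g z * normGammaSq Γ z :=
    integrable_exp_neg_half_normGammaSq_mul_normGammaSq hΓ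
  have hbound : ∀ z, ‖c * (g z * (normGammaSq Γ Δ / 2) + g z * (Δ ⬝ᵥ Γ⁻¹ *ᵥ z))‖ ≤
      c * (g z * normGammaSq Γ Δ) + c / 2 * (g z * normGammaSq Γ z) := by
    intro z
    have hΔ := normGammaSq_nonneg hΓ Δ
    have hsum : |normGammaSq Γ Δ / 2 + Δ ⬝ᵥ Γ⁻¹ *ᵥ z| ≤ normGammaSq Γ Δ + normGammaSq Γ z / 2 := by
      refine (abs_add_le _ _).trans ?_
      have := abs_dotProduct_inv_mulVec_le hΓ Δ z
      rw [abs_of_nonneg (by positivity)]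
      linarith
    rw [← mul_add, norm_mul, norm_mul, norm_of_nonneg (by positivity),
      norm_of_nonneg (exp_pos _).le, norm_eq_abs]
    calc c * (g z * |normGammaSq Γ Δ / 2 + Δ ⬝ᵥ Γ⁻¹ *ᵥ z|)
        ≤ c * (g z * (normGammaSq Γ Δ + normGammaSq Γ z / 2)) := by gcongr
      _ = _ := by ring
  calc ∫ y, ‖gaussLikelihood Γ G' x y * log (gaussLikelihood Γ G' x y / gaussLikelihood Γ G x y)‖
      = ∫ z, ‖c * (g z * (normGammaSq Γ Δ / 2) + g z * (Δ ⬝ᵥ Γ⁻¹ *ᵥ z))‖ := by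
        simp only [gaussLikelihood_mul_log_div hΓ]
        exact integral_sub_left_eq_self
          (fun z => ‖c * (g z * (normGammaSq Γ Δ / 2) + g z * (Δ ⬝ᵥ Γ⁻¹ *ᵥ z))‖) volume (G' x)
    _ ≤ ∫ z, (c * (g z * normGammaSq Γ Δ) + c / 2 * (g z * normGammaSq Γ z)) :=
        integral_mono_of_nonneg (ae_of_all _ fun _ => norm_nonneg _)
          (((hg.mul_const _).const_mul c).add (hgq.const_mul _)) (ae_of_all _ hbound)
    _ = _ := by
        rw [integral_add ((hg.mul_const _).const_mul c) (hgq.const_mul _), integral_const_mul,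
          integral_const_mul, integral_mul_const, integral_exp_neg_half_normGammaSq hΓ,
          ← mul_assoc, show c * √((2 * π) ^ d * Γ.det) = 1 from inv_mul_cancel₀ (by positivity),
          one_mul]

end RelativeEntropy

section Evidence

variable {d : ℕ} {Γ : Matrix (Fin d) (Fin d) ℝ} {X : Type*} [MeasurableSpace X] {μ : Measure X}
  {G G' : X → Fin d → ℝ}

theorem integrable_gaussLikelihood_left [IsFiniteMeasure μ] (hΓ : Γ.PosDef) (hG : Measurable G)
    (y : Fin d → ℝ) : Integrable (fun x => gaussLikelihood Γ G x y) μ :=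
  .of_bound ((measurable_gaussLikelihood hG).comp measurable_prodMk_right).aestronglyMeasurable _
    (ae_of_all _ fun x => by
      rw [norm_of_nonneg (gaussLikelihood_pos hΓ G x y).le]
      exact gaussLikelihood_le hΓ G x y)

theorem integrable_uncurry_gaussLikelihood [IsFiniteMeasure μ] (hΓ : Γ.PosDef)
    (hG : Measurable G) : Integrable (Function.uncurry (gaussLikelihood Γ G)) (μ.prod volume) := by
  refine (integrable_prod_iff (measurable_gaussLikelihood hG).aestronglyMeasurable).2
    ⟨ae_of_all _ (integrable_gaussLikelihood hΓ G), ?_⟩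
  simp only [Function.uncurry_apply_pair, norm_of_nonneg (gaussLikelihood_pos hΓ G _ _).le,
    integral_gaussLikelihood hΓ]
  exact integrable_const 1

theorem integrable_uncurry_gaussLikelihood_mul_log_div [IsFiniteMeasure μ] (hΓ : Γ.PosDef)
    (hG : Measurable G) (hG' : Measurable G')
    (hint : Integrable (fun x => normGammaSq Γ (G x - G' x)) μ) :
    Integrable (Function.uncurry fun x y =>
      gaussLikelihood Γ G' x y * log (gaussLikelihood Γ G' x y / gaussLikelihood Γ G x y))
      (μ.prod volume) := by
  have hmeas : Measurable (Function.uncurry fun x y =>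
      gaussLikelihood Γ G' x y * log (gaussLikelihood Γ G' x y / gaussLikelihood Γ G x y)) :=
    (measurable_gaussLikelihood hG').mul
      ((measurable_gaussLikelihood hG').div (measurable_gaussLikelihood hG)).log
  refine (integrable_prod_iff hmeas.aestronglyMeasurable).2
    ⟨ae_of_all _ (integrable_gaussLikelihood_mul_log_div hΓ G G'), ?_⟩
  exact (hint.add (integrable_const _)).mono'
    hmeas.norm.stronglyMeasurable.integral_prod_right'.aestronglyMeasurable (ae_of_all _ fun x =>
      (norm_of_nonneg (integral_nonneg fun _ => norm_nonneg _)).trans_le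
        (integral_norm_gaussLikelihood_mul_log_div_le hΓ G G' x))

theorem measurable_evidenceDensity [SFinite μ] (hG : Measurable G) :
    Measurable (evidenceDensity Γ μ G) :=
  (measurable_gaussLikelihood hG).stronglyMeasurable.integral_prod_left'.measurable

theorem integrable_evidenceDensity [IsFiniteMeasure μ] (hΓ : Γ.PosDef) (hG : Measurable G) :
    Integrable (evidenceDensity Γ μ G) :=
  (integrable_uncurry_gaussLikelihood hΓ hG).integral_prod_right

theorem evidenceDensity_pos [IsFiniteMeasure μ] [NeZero μ] (hΓ : Γ.PosDef) (hG : Measurable G)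
    (y : Fin d → ℝ) : 0 < evidenceDensity Γ μ G y :=
  integral_pos_of_forall_pos (gaussLikelihood_pos hΓ G · y)
    (integrable_gaussLikelihood_left hΓ hG y)

end Evidence

theorem kl_evidence_bound_by_forward_error_general {d : ℕ}
    {X : Type*} [MeasurableSpace X]
    (μ : Measure X) [IsProbabilityMeasure μ]
    (Γ : Matrix (Fin d) (Fin d) ℝ) (hΓ_pd : Γ.PosDef)
    (G GK : X → (Fin d → ℝ)) (hG : Measurable G) (hGK : Measurable GK)
    (h_int : Integrable (fun x => normGammaSq Γ (G x - GK x)) μ) :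
    ∫ y, evidenceDensity Γ μ GK y *
        Real.log (evidenceDensity Γ μ GK y / evidenceDensity Γ μ G y)
      ≤ (1 / 2) * ∫ x, normGammaSq Γ (G x - GK x) ∂μ := by
  set f : X → (Fin d → ℝ) → ℝ := fun x y =>
    gaussLikelihood Γ GK x y * log (gaussLikelihood Γ GK x y / gaussLikelihood Γ G x y)
  have hf : Integrable (Function.uncurry f) (μ.prod volume) :=
    integrable_uncurry_gaussLikelihood_mul_log_div hΓ_pd hG hGK h_int
  have hupper : ∀ᵐ y, evidenceDensity Γ μ GK y *
      log (evidenceDensity Γ μ GK y / evidenceDensity Γ μ G y) ≤ ∫ x, f x y ∂μ := by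
    filter_upwards [hf.prod_left_ae] with y hy
    exact integral_mul_log_integral_div_le (gaussLikelihood_pos hΓ_pd GK · y)
      (gaussLikelihood_pos hΓ_pd G · y) (integrable_gaussLikelihood_left hΓ_pd hGK y)
      (integrable_gaussLikelihood_left hΓ_pd hG y) hy
  have hlower : ∀ y, evidenceDensity Γ μ GK y - evidenceDensity Γ μ G y ≤
      evidenceDensity Γ μ GK y * log (evidenceDensity Γ μ GK y / evidenceDensity Γ μ G y) :=
    fun y => sub_le_mul_log_div (evidenceDensity_pos hΓ_pd hGK y) (evidenceDensity_pos hΓ_pd hG y)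
  have hmeas : Measurable fun y => evidenceDensity Γ μ GK y *
      log (evidenceDensity Γ μ GK y / evidenceDensity Γ μ G y) :=
    (measurable_evidenceDensity hGK).mul
      ((measurable_evidenceDensity hGK).div (measurable_evidenceDensity hG)).log
  have hlhs := integrable_of_le_of_le hmeas.aestronglyMeasurable (ae_of_all _ hlower) hupper
    ((integrable_evidenceDensity hΓ_pd hGK).sub (integrable_evidenceDensity hΓ_pd hG))
    hf.integral_prod_right
  calc _ ≤ ∫ y, ∫ x, f x y ∂μ := integral_mono_ae hlhs hf.integral_prod_right hupper
    _ = ∫ x, (∫ y, f x y) ∂μ := (integral_integral_swap hf).symm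
    _ = ∫ x, normGammaSq Γ (G x - GK x) / 2 ∂μ :=
        integral_congr_ae (ae_of_all _ (integral_gaussLikelihood_mul_log_div hΓ_pd G GK))
    _ = _ := by rw [integral_div]; ring

/-- For a Borel probability measure `μ` on a separable Banach space `X`,
a symmetric positive definite `Γ`, and measurable maps `G, G_K : X → ℝ^d` with
`∫ ‖G - G_K‖_Γ² dμ < ∞`, the evidence densities satisfy
`D_KL(π^K, π) ≤ ½ ∫ ‖G - G_K‖_Γ² dμ`. -/
theorem kl_evidence_bound_by_forward_error {d : ℕ}
    {X : Type*} [NormedAddCommGroup X] [NormedSpace ℝ X] [CompleteSpace X]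
    [TopologicalSpace.SeparableSpace X] [MeasurableSpace X] [BorelSpace X]
    (μ : Measure X) [IsProbabilityMeasure μ]
    (Γ : Matrix (Fin d) (Fin d) ℝ) (hΓ_symm : Γ.IsSymm) (hΓ_pd : Γ.PosDef)
    (G GK : X → (Fin d → ℝ)) (hG : Measurable G) (hGK : Measurable GK)
    (h_int : Integrable (fun x => normGammaSq Γ (G x - GK x)) μ) :
    ∫ y, evidenceDensity Γ μ GK y *
        Real.log (evidenceDensity Γ μ GK y / evidenceDensity Γ μ G y)
      ≤ (1 / 2) * ∫ x, normGammaSq Γ (G x - GK x) ∂μ :=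
  kl_evidence_bound_by_forward_error_general μ Γ hΓ_pd G GK hG hGK h_int
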